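/- Let f(x) = a_n x^n + ... + a_0 ∈ ℤ[x] satisfy 0 < a_0 ≤ a_1 ≤ ... ≤ a_{k-1} < a_k < a_{k+1} ≤ ... ≤ a_n for some k with 0 ≤ k ≤ n-1. If a_n is a prime number, then f is irreducible in ℤ[x]. -/

import Mathlib

/-!
With `bᵢ = aᵢ - aᵢ₋₁ ≥ 0` (and `a₋₁ = 0`) one has `(1 - z) f(z) = ∑ bᵢ zⁱ - aₙ zⁿ⁺¹` and
`∑ bᵢ = aₙ`, so a root `z` of `f` with `|z| ≥ 1` has `|z| = 1` by the triangle inequality, and then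
equality forces `zⁱ = zⁿ⁺¹` whenever `bᵢ > 0`. The two consecutive strict increases give
`bₖ, bₖ₊₁ > 0`, hence `zᵏ = zᵏ⁺¹`, i.e. `z = 1`, which is not a root. So every complex root of `f`
lies in the open unit disc. In a factorization `f = g h` the leading coefficients multiply to the
prime `aₙ`, so one factor, say `g`, has leading coefficient `±1`; if `g` were nonconstant, then
`|g(0)| = |lc g| ∏ |roots of g| < 1` would contradict `g(0) ∣ a₀ ≠ 0`. Hence `g = ±1`.
-/

open Polynomial Finset

def firstDiff {G : Type*} [AddGroup G] (a : ℕ → G) : ℕ → G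
  | 0 => a 0
  | i + 1 => a (i + 1) - a i

section firstDiff

variable {G : Type*} [AddCommGroup G]

theorem sum_range_firstDiff (a : ℕ → G) (n : ℕ) :
    ∑ i ∈ range (n + 1), firstDiff a i = a n := by
  induction n with
  | zero => simp [firstDiff]
  | succ n ih => rw [sum_range_succ, ih, firstDiff, add_sub_cancel]

theorem sum_firstDiff_mul_pow_sub {R : Type*} [CommRing R] (a : ℕ → R) (n : ℕ) (z : R) :
    ∑ i ∈ range (n + 1), firstDiff a i * z ^ i - a n * z ^ (n + 1) =
      (1 - z) * ∑ i ∈ range (n + 1), a i * z ^ i := by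
  induction n with
  | zero => simp [firstDiff]; ring
  | succ n ih =>
    rw [sum_range_succ, sum_range_succ _ (n + 1), firstDiff]
    linear_combination ih

end firstDiff

theorem Complex.eq_one_of_re_eq_one_of_norm_le_one {u : ℂ} (hre : u.re = 1) (hu : ‖u‖ ≤ 1) :
    u = 1 := by
  have him : u.im = 0 := Complex.abs_re_eq_norm.mp <|
    le_antisymm (Complex.abs_re_le_norm u) (by rw [hre, abs_one]; exact hu)
  exact Complex.ext hre him

theorem Complex.eq_one_of_sum_mul_eq_sum {ι : Type*} {s : Finset ι} {c : ι → ℝ} {u : ι → ℂ}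
    (hc : ∀ i ∈ s, 0 ≤ c i) (hu : ∀ i ∈ s, ‖u i‖ ≤ 1)
    (h : ∑ i ∈ s, (c i : ℂ) * u i = ∑ i ∈ s, (c i : ℂ)) {j : ι} (hj : j ∈ s) (hcj : 0 < c j) :
    u j = 1 := by
  have hterm : ∀ i ∈ s, 0 ≤ c i * (1 - (u i).re) := fun i hi =>
    mul_nonneg (hc i hi) (sub_nonneg.mpr ((Complex.re_le_norm _).trans (hu i hi)))
  have hsum : ∑ i ∈ s, c i * (1 - (u i).re) = 0 := by
    have := congrArg Complex.re h
    simp only [Complex.re_sum, Complex.re_ofReal_mul, Complex.ofReal_re] at this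
    simp only [mul_sub, mul_one, sum_sub_distrib, this, sub_self]
  have hj0 := (sum_eq_zero_iff_of_nonneg hterm).mp hsum j hj
  refine Complex.eq_one_of_re_eq_one_of_norm_le_one ?_ (hu j hj)
  have := (mul_eq_zero.mp hj0).resolve_left hcj.ne'
  linarith

section rootBound

variable {n : ℕ} {b : ℕ → ℝ} {z : ℂ}

theorem norm_le_one_of_sum_mul_pow_eq (hb : ∀ i ≤ n, 0 ≤ b i)
    (hB : 0 < ∑ i ∈ range (n + 1), b i)
    (hz : ∑ i ∈ range (n + 1), (b i : ℂ) * z ^ i = (∑ i ∈ range (n + 1), b i : ℝ) * z ^ (n + 1)) :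
    ‖z‖ ≤ 1 := by
  by_contra! hr
  have hbound : (∑ i ∈ range (n + 1), b i) * ‖z‖ ^ (n + 1) ≤
      (∑ i ∈ range (n + 1), b i) * ‖z‖ ^ n :=
    calc (∑ i ∈ range (n + 1), b i) * ‖z‖ ^ (n + 1)
        = ‖∑ i ∈ range (n + 1), (b i : ℂ) * z ^ i‖ := by
          rw [hz, norm_mul, norm_pow, Complex.norm_real, Real.norm_of_nonneg hB.le]
      _ ≤ ∑ i ∈ range (n + 1), b i * ‖z‖ ^ i := by
          refine (norm_sum_le _ _).trans_eq (sum_congr rfl fun i hi => ?_)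
          rw [norm_mul, norm_pow, Complex.norm_real,
            Real.norm_of_nonneg (hb i (Nat.lt_succ_iff.mp (mem_range.mp hi)))]
      _ ≤ ∑ i ∈ range (n + 1), b i * ‖z‖ ^ n := by
          refine sum_le_sum fun i hi => ?_
          have hi := Nat.lt_succ_iff.mp (mem_range.mp hi)
          exact mul_le_mul_of_nonneg_left (pow_le_pow_right₀ hr.le hi) (hb i hi)
      _ = (∑ i ∈ range (n + 1), b i) * ‖z‖ ^ n := (sum_mul ..).symm
  have hpow : ‖z‖ ^ n < ‖z‖ ^ (n + 1) := pow_lt_pow_right₀ hr n.lt_succ_self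
  exact (mul_lt_mul_of_pos_left hpow hB).not_ge hbound

theorem eq_one_of_sum_mul_pow_eq_of_norm_eq_one (hb : ∀ i ≤ n, 0 ≤ b i) {k : ℕ}
    (hk : k < n) (hbk : 0 < b k) (hbk' : 0 < b (k + 1)) (hz1 : ‖z‖ = 1)
    (hz : ∑ i ∈ range (n + 1), (b i : ℂ) * z ^ i = (∑ i ∈ range (n + 1), b i : ℝ) * z ^ (n + 1)) :
    z = 1 := by
  have hz0 : z ≠ 0 := norm_ne_zero_iff.mp (hz1 ▸ one_ne_zero)
  have hzn : z ^ (n + 1) ≠ 0 := pow_ne_zero _ hz0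
  have hdiv : ∑ i ∈ range (n + 1), (b i : ℂ) * (z ^ i / z ^ (n + 1)) =
      ∑ i ∈ range (n + 1), (b i : ℂ) := by
    simp_rw [← mul_div_assoc, ← sum_div, hz, Complex.ofReal_sum, mul_div_cancel_right₀ _ hzn]
  have hunit : ∀ i ∈ range (n + 1), ‖z ^ i / z ^ (n + 1)‖ ≤ 1 := fun i _ => by
    rw [norm_div, norm_pow, norm_pow, hz1, one_pow, one_pow, div_one]
  have hzk : z ^ k = z ^ (n + 1) := (div_eq_one_iff_eq hzn).mp <|
    Complex.eq_one_of_sum_mul_eq_sum (fun i hi => hb i (Nat.lt_succ_iff.mp (mem_range.mp hi)))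
      hunit hdiv (mem_range.mpr (by omega)) hbk
  have hzk' : z ^ (k + 1) = z ^ (n + 1) := (div_eq_one_iff_eq hzn).mp <|
    Complex.eq_one_of_sum_mul_eq_sum (fun i hi => hb i (Nat.lt_succ_iff.mp (mem_range.mp hi)))
      hunit hdiv (mem_range.mpr (by omega)) hbk'
  rw [← hzk, pow_succ] at hzk'
  exact mul_left_cancel₀ (pow_ne_zero k hz0) (hzk'.trans (mul_one _).symm)

theorem norm_lt_one_or_eq_one_of_sum_mul_pow_eq (hb : ∀ i ≤ n, 0 ≤ b i) {k : ℕ}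
    (hk : k < n) (hbk : 0 < b k) (hbk' : 0 < b (k + 1))
    (hz : ∑ i ∈ range (n + 1), (b i : ℂ) * z ^ i = (∑ i ∈ range (n + 1), b i : ℝ) * z ^ (n + 1)) :
    ‖z‖ < 1 ∨ z = 1 := by
  have hB : 0 < ∑ i ∈ range (n + 1), b i :=
    sum_pos' (fun i hi => hb i (Nat.lt_succ_iff.mp (mem_range.mp hi)))
      ⟨k, mem_range.mpr (by omega), hbk⟩
  rcases (norm_le_one_of_sum_mul_pow_eq hb hB hz).lt_or_eq with hlt | heq
  · exact .inl hlt
  · exact .inr (eq_one_of_sum_mul_pow_eq_of_norm_eq_one hb hk hbk hbk' heq hz)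

end rootBound

theorem norm_lt_one_of_sum_mul_pow_eq_zero {n k : ℕ} {a : ℕ → ℝ} (h0 : 0 < a 0)
    (hmono : ∀ i < n, a i ≤ a (i + 1)) (hk : k < n)
    (hstrict1 : 0 < k → a (k - 1) < a k) (hstrict2 : a k < a (k + 1)) {z : ℂ}
    (hz : ∑ i ∈ range (n + 1), (a i : ℂ) * z ^ i = 0) : ‖z‖ < 1 := by
  have hb : ∀ i ≤ n, 0 ≤ firstDiff a i
    | 0, _ => h0.le
    | i + 1, hi => sub_nonneg.mpr (hmono i hi)
  have hbk : 0 < firstDiff a k := by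
    cases k with
    | zero => exact h0
    | succ j => exact sub_pos.mpr (hstrict1 j.succ_pos)
  have hz' : ∑ i ∈ range (n + 1), ((firstDiff a i : ℝ) : ℂ) * z ^ i =
      (∑ i ∈ range (n + 1), firstDiff a i : ℝ) * z ^ (n + 1) := by
    have hcast : ∀ i, ((firstDiff a i : ℝ) : ℂ) = firstDiff (fun i => (a i : ℂ)) i
      | 0 => rfl
      | i + 1 => Complex.ofReal_sub _ _
    have := sum_firstDiff_mul_pow_sub (fun i => (a i : ℂ)) n z
    rw [hz, mul_zero, sub_eq_zero] at this
    simpa only [hcast, sum_range_firstDiff] using this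
  rcases norm_lt_one_or_eq_one_of_sum_mul_pow_eq hb hk hbk (sub_pos.mpr hstrict2) hz' with
    hlt | rfl
  · exact hlt
  have hpos : ∀ i ≤ n, 0 < a i := fun i hi => by
    rw [← sum_range_firstDiff a i]
    exact sum_pos' (fun j hj => hb j (by have := mem_range.mp hj; omega)) ⟨0, by simp, h0⟩
  have hsum : 0 < ∑ i ∈ range (n + 1), a i :=
    sum_pos (fun i hi => hpos i (Nat.lt_succ_iff.mp (mem_range.mp hi)))
      (nonempty_range_iff.mpr n.succ_ne_zero)
  simp only [one_pow, mul_one] at hz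
  exact absurd (by exact_mod_cast hz) hsum.ne'

theorem norm_multiset_prod_lt_one {𝕜 : Type*} [NormedField 𝕜] {s : Multiset 𝕜} (hs : s ≠ 0)
    (h : ∀ x ∈ s, ‖x‖ < 1) : ‖s.prod‖ < 1 := by
  induction s using Multiset.induction_on with
  | empty => exact absurd rfl hs
  | cons x t ih =>
    rw [Multiset.prod_cons, norm_mul]
    have hx := h x (Multiset.mem_cons_self x t)
    by_cases ht : t = 0
    · simpa [ht] using hx
    · exact mul_lt_one_of_nonneg_of_lt_one_left (norm_nonneg x) hx
        (ih ht fun y hy => h y (Multiset.mem_cons_of_mem hy)).le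

namespace Polynomial

theorem norm_coeff_zero_lt_norm_leadingCoeff {q : ℂ[X]} (hq : 0 < q.natDegree)
    (hroots : ∀ z ∈ q.roots, ‖z‖ < 1) : ‖q.coeff 0‖ < ‖q.leadingCoeff‖ := by
  have hsplits : q.Splits := IsAlgClosed.splits q
  have hroots_ne : q.roots ≠ 0 := by
    rw [← Multiset.card_pos, ← hsplits.natDegree_eq_card_roots]
    exact hq
  have hlc : 0 < ‖q.leadingCoeff‖ :=
    norm_pos_iff.mpr (leadingCoeff_ne_zero.mpr (ne_zero_of_natDegree_gt hq))
  rw [hsplits.coeff_zero_eq_leadingCoeff_mul_prod_roots, norm_mul, norm_mul, norm_pow, norm_neg,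
    norm_one, one_pow, one_mul]
  exact mul_lt_of_lt_one_right hlc (norm_multiset_prod_lt_one hroots_ne hroots)

theorem not_isUnit_leadingCoeff_of_norm_lt_one {g : ℤ[X]} (hg : 0 < g.natDegree)
    (h0 : g.coeff 0 ≠ 0) (hroots : ∀ z : ℂ, aeval z g = 0 → ‖z‖ < 1) :
    ¬IsUnit g.leadingCoeff := by
  intro hunit
  have hinj : Function.Injective (algebraMap ℤ ℂ) := RingHom.injective_int _
  have hlt := norm_coeff_zero_lt_norm_leadingCoeff (q := g.map (algebraMap ℤ ℂ))
    (by rwa [natDegree_map_eq_of_injective hinj])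
    (fun z hz => hroots z (by rw [aeval_def, ← eval_map]; exact (mem_roots'.mp hz).2))
  rw [coeff_map, leadingCoeff_map_of_injective hinj, algebraMap_int_eq, eq_intCast, eq_intCast,
    Complex.norm_intCast, Complex.norm_intCast] at hlt
  have hlt' : |g.coeff 0| < |g.leadingCoeff| := by exact_mod_cast hlt
  rw [Int.isUnit_iff_abs_eq.mp hunit] at hlt'
  exact hlt'.not_ge (Int.one_le_abs h0)

theorem isUnit_of_dvd_of_isUnit_leadingCoeff {F g : ℤ[X]} (h0 : F.coeff 0 ≠ 0)
    (hroots : ∀ z : ℂ, aeval z F = 0 → ‖z‖ < 1) (hgF : g ∣ F) (hg : IsUnit g.leadingCoeff) :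
    IsUnit g := by
  obtain ⟨h, rfl⟩ := hgF
  rcases Nat.eq_zero_or_pos g.natDegree with hdeg | hdeg
  · rw [eq_C_of_natDegree_eq_zero hdeg]
    exact isUnit_C.mpr (by rwa [leadingCoeff, hdeg] at hg)
  · refine absurd hg (not_isUnit_leadingCoeff_of_norm_lt_one hdeg ?_ fun z hz => ?_)
    · exact left_ne_zero_of_mul (by rwa [mul_coeff_zero] at h0)
    · exact hroots z (by rw [map_mul, hz, zero_mul])

theorem irreducible_of_norm_lt_one {F : ℤ[X]} (hlc : Irreducible F.leadingCoeff)
    (h0 : F.coeff 0 ≠ 0) (hroots : ∀ z : ℂ, aeval z F = 0 → ‖z‖ < 1) : Irreducible F := by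
  refine ⟨fun hF => hlc.not_isUnit ?_, fun g h hgh => ?_⟩
  · obtain ⟨c, hc, rfl⟩ := Polynomial.isUnit_iff.mp hF
    rwa [leadingCoeff_C]
  · rw [hgh, leadingCoeff_mul] at hlc
    exact (hlc.isUnit_or_isUnit rfl).imp
      (isUnit_of_dvd_of_isUnit_leadingCoeff h0 hroots (hgh ▸ dvd_mul_right g h))
      (isUnit_of_dvd_of_isUnit_leadingCoeff h0 hroots (hgh ▸ dvd_mul_left h g))

theorem coeff_sum_range_C_mul_X_pow {R : Type*} [Semiring R] (a : ℕ → R) (n j : ℕ) :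
    (∑ i ∈ range (n + 1), C (a i) * X ^ i).coeff j = if j < n + 1 then a j else 0 := by
  simp only [finsetSum_coeff, coeff_C_mul_X_pow, sum_ite_eq, mem_range]

theorem leadingCoeff_sum_range_C_mul_X_pow {R : Type*} [Semiring R] {a : ℕ → R} {n : ℕ}
    (hn : a n ≠ 0) :
    (∑ i ∈ range (n + 1), C (a i) * X ^ i).leadingCoeff = a n := by
  have hcoeff := coeff_sum_range_C_mul_X_pow a n n
  rw [if_pos n.lt_succ_self] at hcoeff
  have hdeg : (∑ i ∈ range (n + 1), C (a i) * X ^ i).natDegree = n :=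
    natDegree_eq_of_le_of_coeff_ne_zero
      (natDegree_sum_le_of_forall_le _ _ fun i hi =>
        (natDegree_C_mul_X_pow_le _ _).trans (Nat.lt_succ_iff.mp (mem_range.mp hi)))
      (hcoeff ▸ hn)
  rw [leadingCoeff, hdeg, hcoeff]

end Polynomial

theorem stmt_7 (n k : ℕ) (a : ℕ → ℤ) (hn : 1 ≤ n) (hk : k ≤ n - 1)
    (h0 : 0 < a 0)
    (hmono : ∀ i, i < n → a i ≤ a (i + 1))
    (hstrict1 : 0 < k → a (k - 1) < a k)
    (hstrict2 : a k < a (k + 1))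
    (hp : (a n).natAbs.Prime) :
    Irreducible (∑ i ∈ Finset.range (n + 1), Polynomial.C (a i) * Polynomial.X ^ i) := by
  have hlc := leadingCoeff_sum_range_C_mul_X_pow (Int.natAbs_ne_zero.mp hp.ne_zero)
  refine irreducible_of_norm_lt_one (hlc ▸ (Int.prime_iff_natAbs_prime.mpr hp).irreducible)
    (by simpa [coeff_sum_range_C_mul_X_pow] using h0.ne') fun z hz => ?_
  refine norm_lt_one_of_sum_mul_pow_eq_zero (a := fun i => (a i : ℝ)) (mod_cast h0)
    (fun i hi => mod_cast hmono i hi) (by omega) (fun hk0 => mod_cast hstrict1 hk0)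
    (mod_cast hstrict2) ?_
  simpa using hz
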